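/- Let (G, L, c, r, e_r) be a rooted WRAP instance, let S̄ ⊆ L be a link set, and let X ⊆ S̄ be a festoon such that no festoon X'' ⊆ S̄ has a festoon interval strictly containing I_X. Then for every festoon Y ⊆ S̄, the festoon intervals I_X and I_Y do not cross, i.e., I_X ⊆ I_Y, I_Y ⊆ I_X, or I_X ∩ I_Y = ∅. -/

import Mathlib

/-!
Common definitions for the Weighted Ring Augmentation Problem (WRAP).

A rooted WRAP instance `(G, L, c, r, e_r)` has a ring graph `G` whose
vertices we identify with `Fin n`, numbered `r = 0, 1, …, n-1` in the order
in which they appear along the path `(V, E \ {e_r})` starting at the root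
`r = 0`.  Vertex `i` is to the left of `j` iff `i < j`.
-/

/-- An undirected link: an unordered pair of distinct vertices of the ring,
recorded via its left endpoint `lo` and its right endpoint `hi`. -/
structure Link (n : ℕ) where
  lo : Fin n
  hi : Fin n
  lo_lt_hi : lo < hi

instance {n : ℕ} : DecidableEq (Link n) := fun a b =>
  decidable_of_iff (a.lo = b.lo ∧ a.hi = b.hi) (by cases a; cases b; simp)

/-- A directed link: an ordered pair of distinct vertices. -/
structure DLink (n : ℕ) where
  tail : Fin n
  head : Fin n
  ne : tail ≠ head

instance {n : ℕ} : DecidableEq (DLink n) := fun a b =>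
  decidable_of_iff (a.tail = b.tail ∧ a.head = b.head) (by cases a; cases b; simp)

variable {n : ℕ}

/-- The underlying undirected link of a directed link. -/
def DLink.toLink (d : DLink n) : Link n :=
  ⟨min d.tail d.head, max d.tail d.head, min_lt_max.mpr d.ne⟩

/-- `ℓ` is incident to `v`. -/
def Link.Incident (ℓ : Link n) (v : Fin n) : Prop := ℓ.lo = v ∨ ℓ.hi = v

/-- The 2-cuts `C_G` of the ring: the nonempty intervals of consecutive
vertices along the path `(V, E \ {e_r})` that do not contain the root `0`. -/
def IsCut [NeZero n] (C : Finset (Fin n)) : Prop :=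
  ∃ a b : Fin n, 0 < a ∧ a ≤ b ∧ C = Finset.Icc a b

/-- `ℓ` has exactly one endpoint in `C`. -/
def crossesCut (ℓ : Link n) (C : Finset (Fin n)) : Prop :=
  (ℓ.lo ∈ C ∧ ℓ.hi ∉ C) ∨ (ℓ.lo ∉ C ∧ ℓ.hi ∈ C)

instance (ℓ : Link n) (C : Finset (Fin n)) : Decidable (crossesCut ℓ C) := by
  unfold crossesCut; infer_instance

/-- `δ_K(C)`: the links of `K` with exactly one endpoint in `C`. -/
def cutLinks (K : Finset (Link n)) (C : Finset (Fin n)) : Finset (Link n) :=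
  K.filter (fun ℓ => crossesCut ℓ C)

/-- An (undirected) WRAP solution: every 2-cut is covered by some link. -/
def IsSolution [NeZero n] (S : Finset (Link n)) : Prop :=
  ∀ C : Finset (Fin n), IsCut C → (cutLinks S C).Nonempty

/-- A directed link covers a 2-cut if it enters it. -/
def DCovers (d : DLink n) (C : Finset (Fin n)) : Prop := d.tail ∉ C ∧ d.head ∈ C

/-- A directed WRAP solution: every 2-cut is entered by some directed link. -/
def IsDirSolution [NeZero n] (F : Finset (DLink n)) : Prop :=
  ∀ C : Finset (Fin n), IsCut C → ∃ d ∈ F, DCovers d C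

/-- `d'` is a shortening of `d`: same head, and the tail of `d'` lies on the
unique path between the endpoints of `d` in `(V, E \ {e_r})`. -/
def IsShortening (d' d : DLink n) : Prop :=
  d'.head = d.head ∧ min d.tail d.head ≤ d'.tail ∧ d'.tail ≤ max d.tail d.head

/-- A non-shortenable directed WRAP solution: deleting any link, or replacing
any link by a strict shortening of it, destroys feasibility. -/
def NonShortenable [NeZero n] (F : Finset (DLink n)) : Prop :=
  IsDirSolution F ∧
    (∀ d ∈ F, ¬ IsDirSolution (F.erase d)) ∧
    (∀ d ∈ F, ∀ d' : DLink n, IsShortening d' d → d' ≠ d →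
      ¬ IsDirSolution (insert d' (F.erase d)))

/-- `d` is a shadow of the undirected link `ℓ`: a shortening of one of the two
orientations of `ℓ`. -/
def IsShadow (d : DLink n) (ℓ : Link n) : Prop :=
  (d.head = ℓ.lo ∨ d.head = ℓ.hi) ∧ ℓ.lo ≤ d.tail ∧ d.tail ≤ ℓ.hi

/-- `u` is a descendant of `v` in `(V, F)` (every vertex is a descendant of
itself). -/
def Descend (F : Finset (DLink n)) (v u : Fin n) : Prop :=
  Relation.ReflTransGen (fun a b => ∃ d ∈ F, d.tail = a ∧ d.head = b) v u

/-- `u` is `v`-good: not a descendant of `v` in `(V, F)`. -/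
def VGood (F : Finset (DLink n)) (v u : Fin n) : Prop := ¬ Descend F v u

/-- `w` is the least common ancestor of the vertex set `U` in `(V, F)`. -/
def IsLCA (F : Finset (DLink n)) (w : Fin n) (U : Set (Fin n)) : Prop :=
  (∀ u ∈ U, Descend F w u) ∧ ∀ x : Fin n, (∀ u ∈ U, Descend F x u) → Descend F x w

/-- `d = (u,v)` is responsible for the 2-cut `C`: it covers `C` and no
directed link of `F` on the `r`–`u` path in the arborescence `(V, F)`
(i.e. no link of `F` whose head is an ancestor of `u`) covers `C`. -/
def Responsible [NeZero n] (F : Finset (DLink n)) (d : DLink n)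
    (C : Finset (Fin n)) : Prop :=
  IsCut C ∧ DCovers d C ∧
    ∀ d' ∈ F, Descend F d'.head d.tail → ¬ DCovers d' C

/-- `Drop_F(K)`: directed links of `F` all of whose responsible cuts
are covered by `K`. -/
def Drop [NeZero n] (F : Finset (DLink n)) (K : Finset (Link n)) : Set (DLink n) :=
  {d | d ∈ F ∧ ∀ C : Finset (Fin n), Responsible F d C → (cutLinks K C).Nonempty}

/-- Two links are crossing: their endpoints interleave along the ring. -/
def Crossing (ℓ f : Link n) : Prop :=
  (ℓ.lo < f.lo ∧ f.lo < ℓ.hi ∧ ℓ.hi < f.hi) ∨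
  (f.lo < ℓ.lo ∧ ℓ.lo < f.hi ∧ f.hi < ℓ.hi)

/-- Two links intersect: they share an endpoint or cross. -/
def Intersects (ℓ f : Link n) : Prop :=
  (ℓ.lo = f.lo ∨ ℓ.lo = f.hi ∨ ℓ.hi = f.lo ∨ ℓ.hi = f.hi) ∨ Crossing ℓ f

/-- The vertex `u` is connected to the vertex `w` in the link intersection
graph `H[K]`: there is a path in `H[K]` from a link incident to `u` to a link
incident to `w`. -/
def ConnVert (K : Finset (Link n)) (u w : Fin n) : Prop :=
  ∃ ℓ ∈ K, ∃ f ∈ K, ℓ.Incident u ∧ f.Incident w ∧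
    Relation.ReflTransGen (fun a b => a ∈ K ∧ b ∈ K ∧ Intersects a b) ℓ f

/-- The link intersection graph `H[S]` is connected. -/
def ConnLinkSet (S : Finset (Link n)) : Prop :=
  ∀ ℓ ∈ S, ∀ f ∈ S,
    Relation.ReflTransGen (fun a b => a ∈ S ∧ b ∈ S ∧ Intersects a b) ℓ f

/-- `V(S)`: the vertices incident to a link of `S`. -/
def linkVerts (S : Finset (Link n)) : Set (Fin n) := {v | ∃ ℓ ∈ S, ℓ.Incident v}

/-- A festoon order: the links (listed as `f 0, f 1, …`) form a path in the
link intersection graph visited in this order, with both left endpoints and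
right endpoints strictly increasing. -/
def IsFestoonSeq {p : ℕ} (f : Fin p → Link n) : Prop :=
  (∀ i j : Fin p, i < j → (f i).lo < (f j).lo ∧ (f i).hi < (f j).hi) ∧
  (∀ i j : Fin p, (i : ℕ) + 1 = (j : ℕ) → Intersects (f i) (f j)) ∧
  (∀ i j : Fin p, (i : ℕ) + 1 < (j : ℕ) → ¬ Intersects (f i) (f j))

/-- A festoon: a nonempty link set admitting a festoon order. -/
def IsFestoon (X : Finset (Link n)) : Prop :=
  ∃ p : ℕ, 0 < p ∧ ∃ f : Fin p → Link n,
    IsFestoonSeq f ∧ X = Finset.image f Finset.univ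

/-- The festoon interval `I_X`: the interval from the leftmost endpoint of a
link of `X` to the rightmost endpoint of a link of `X`. -/
def festoonIval (X : Finset (Link n)) : Set (Fin n) :=
  {w | (∃ ℓ ∈ X, ℓ.lo ≤ w) ∧ ∃ ℓ ∈ X, w ≤ ℓ.hi}

/-- Two festoons are tangled: some link of one intersects some link of the
other. -/
def Tangled (X Y : Finset (Link n)) : Prop :=
  ∃ ℓ ∈ X, ∃ f ∈ Y, Intersects ℓ f

/-- A laminar family of vertex sets: any two members are nested or disjoint. -/
def Laminar (𝓛 : Set (Finset (Fin n))) : Prop :=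
  ∀ A ∈ 𝓛, ∀ B ∈ 𝓛, A ⊆ B ∨ B ⊆ A ∨ Disjoint A B

/-- An inclusion-wise maximal laminar subfamily of `C_G`. -/
def MaxLaminarCuts [NeZero n] (𝓛 : Set (Finset (Fin n))) : Prop :=
  (∀ C ∈ 𝓛, IsCut C) ∧ Laminar 𝓛 ∧
    ∀ C : Finset (Fin n), IsCut C → C ∉ 𝓛 → ¬ Laminar (insert C 𝓛)

/-- An `α`-thin link set. -/
def IsThin [NeZero n] (α : ℕ) (K : Finset (Link n)) : Prop :=
  ∃ 𝓛 : Set (Finset (Fin n)), MaxLaminarCuts 𝓛 ∧ ∀ C ∈ 𝓛, (cutLinks K C).card ≤ α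

/-- The set `𝒳` of festoons connects `v` to a `v`-good vertex. -/
def ConnectsToGood (F : Finset (DLink n)) (v : Fin n)
    (𝒳 : Finset (Finset (Link n))) : Prop :=
  ∃ w : Fin n, VGood F v w ∧ ConnVert (𝒳.biUnion id) v w

/-- The undirected graph obtained from a set of directed links by
disregarding orientations. -/
def undirGraph (F : Finset (DLink n)) : SimpleGraph (Fin n) where
  Adj a b := ∃ d ∈ F, (d.tail = a ∧ d.head = b) ∨ (d.tail = b ∧ d.head = a)
  symm := by
    constructor
    rintro a b ⟨d, hd, h⟩
    exact ⟨d, hd, h.symm⟩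
  loopless := by
    constructor
    rintro a ⟨d, hd, h⟩
    rcases h with ⟨h1, h2⟩ | ⟨h1, h2⟩ <;> exact d.ne (h1.trans h2.symm)

/-- A directed link going to the left along the ring. -/
def LeftGoing (d : DLink n) : Prop := d.head < d.tail

/-- A directed link going to the right along the ring. -/
def RightGoing (d : DLink n) : Prop := d.tail < d.head

/-!
If the intervals `[a, b]` of `X` and `[c, d]` of `Y` cross, say `a < c ≤ b < d`, then a prefix of
`X` followed by a suffix of `Y` is again a festoon, with interval `[a, d] ⊋ [a, b]`. The suffix
starts at the last link `J` of `Y` whose left end is at most `b`, and the prefix ends at the first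
link `K` of `X` whose right end reaches the left end of `J`: then `K` and `J` intersect, no earlier
link of `X` meets `J`, and every later link of `Y` starts beyond `b`, hence beyond all of `X`.
-/

theorem Set.Icc_interleaved_of_not_nested {α : Type*} [LinearOrder α] {a b c d : α}
    (h₁ : ¬ Set.Icc a b ⊆ Set.Icc c d) (h₂ : ¬ Set.Icc c d ⊆ Set.Icc a b)
    (h₃ : (Set.Icc a b ∩ Set.Icc c d).Nonempty) :
    (a < c ∧ c ≤ b ∧ b < d) ∨ (c < a ∧ a ≤ d ∧ d < b) := by
  have hab : a ≤ b := Set.nonempty_Icc.mp ((Set.nonempty_of_not_subset h₁).mono Set.sdiff_subset)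
  have hcd : c ≤ d := Set.nonempty_Icc.mp ((Set.nonempty_of_not_subset h₂).mono Set.sdiff_subset)
  rw [Set.Icc_subset_Icc_iff hab] at h₁
  rw [Set.Icc_subset_Icc_iff hcd] at h₂
  rw [Set.Icc_inter_Icc, Set.nonempty_Icc, max_le_iff, le_min_iff, le_min_iff] at h₃
  grind

section Festoon

variable {n : ℕ}

theorem Link.intersects_iff {ℓ m : Link n} (hlo : ℓ.lo < m.lo) (hhi : ℓ.hi < m.hi) :
    Intersects ℓ m ↔ m.lo ≤ ℓ.hi := by
  have := ℓ.lo_lt_hi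
  have := m.lo_lt_hi
  simp only [Intersects, Crossing, Fin.lt_def, Fin.le_def, Fin.ext_iff] at *
  omega

namespace IsFestoonSeq

variable {p : ℕ} {f : Fin p → Link n}

theorem le_of_le (hf : IsFestoonSeq f) {i j : Fin p} (hij : i ≤ j) :
    (f i).lo ≤ (f j).lo ∧ (f i).hi ≤ (f j).hi := by
  rcases hij.lt_or_eq with h | rfl
  · exact ⟨(hf.1 i j h).1.le, (hf.1 i j h).2.le⟩
  · exact ⟨le_rfl, le_rfl⟩

theorem lo_le_hi_of_succ (hf : IsFestoonSeq f) {i j : Fin p} (hij : (i : ℕ) + 1 = j) :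
    (f j).lo ≤ (f i).hi := by
  have hlt : i < j := Fin.lt_def.mpr (by omega)
  exact (Link.intersects_iff (hf.1 i j hlt).1 (hf.1 i j hlt).2).mp (hf.2.1 i j hij)

theorem comp_of_val_eq (hf : IsFestoonSeq f) {m k : ℕ} (e : Fin m → Fin p)
    (he : ∀ i, (e i : ℕ) = k + i) : IsFestoonSeq (f ∘ e) := by
  refine ⟨fun i j hij => hf.1 _ _ ?_, fun i j hij => hf.2.1 _ _ ?_,
    fun i j hij => hf.2.2 _ _ ?_⟩ <;> simp only [Fin.lt_def, he] at * <;> omega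

theorem append {q : ℕ} {g : Fin q → Link n} (hf : IsFestoonSeq f) (hg : IsFestoonSeq g)
    (hmono : ∀ (i : Fin p) (j : Fin q), (f i).lo < (g j).lo ∧ (f i).hi < (g j).hi)
    (hadj : ∀ (i : Fin p) (j : Fin q), (i : ℕ) + 1 = p + j → Intersects (f i) (g j))
    (hsep : ∀ (i : Fin p) (j : Fin q), (i : ℕ) + 1 < p + j → ¬ Intersects (f i) (g j)) :
    IsFestoonSeq (Fin.append f g) := by
  refine ⟨fun i j h => ?_, fun i j h => ?_, fun i j h => ?_⟩ <;>
    induction i using Fin.addCases <;> induction j using Fin.addCases <;>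
    simp only [Fin.lt_def, Fin.val_castAdd, Fin.val_natAdd] at h <;>
    simp only [Fin.append_left, Fin.append_right]
  all_goals first
    | omega
    | exact hmono _ _
    | exact hadj _ _ h
    | exact hsep _ _ h
    | exact hf.1 _ _ h
    | exact hf.2.1 _ _ h
    | exact hf.2.2 _ _ h
    | exact hg.1 _ _ (Fin.lt_def.mpr (by omega))
    | exact hg.2.1 _ _ (by omega)
    | exact hg.2.2 _ _ (by omega)

theorem festoonIval_image {f : Fin (p + 1) → Link n} (hf : IsFestoonSeq f) :
    festoonIval (Finset.univ.image f) = Set.Icc (f 0).lo (f (Fin.last p)).hi := by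
  ext w
  simp only [festoonIval, Set.mem_Icc, Set.mem_ofPred_eq, Finset.mem_image, Finset.mem_univ,
    true_and, exists_exists_eq_and]
  constructor
  · rintro ⟨⟨i, hi⟩, ⟨j, hj⟩⟩
    exact ⟨(hf.le_of_le (Fin.zero_le i)).1.trans hi, hj.trans (hf.le_of_le (Fin.le_last j)).2⟩
  · rintro ⟨h0, hlast⟩
    exact ⟨⟨0, h0⟩, ⟨Fin.last p, hlast⟩⟩

theorem exists_last_lo_le {f : Fin (p + 1) → Link n} (hf : IsFestoonSeq f) {b : Fin n}
    (h₀ : (f 0).lo ≤ b) (hlast : b < (f (Fin.last p)).hi) :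
    ∃ J, (f J).lo ≤ b ∧ b < (f J).hi ∧ ∀ j, J < j → b < (f j).lo := by
  obtain ⟨J, hJ, hJmax⟩ := Set.exists_max_image {j | (f j).lo ≤ b} id (Set.toFinite _) ⟨0, h₀⟩
  have hafter : ∀ j, J < j → b < (f j).lo := fun j hj =>
    lt_of_not_ge fun h => (hJmax j h).not_gt hj
  refine ⟨J, hJ, ?_, hafter⟩
  rcases (Fin.le_last J).lt_or_eq with hJ' | rfl
  · have hsucc : (J : ℕ) + 1 < p + 1 := by simp only [Fin.lt_def, Fin.val_last] at hJ'; omega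
    exact (hafter ⟨J + 1, hsucc⟩ (Fin.lt_def.mpr (by simp))).trans_le (hf.lo_le_hi_of_succ rfl)
  · exact hlast

theorem exists_first_le_hi {f : Fin (p + 1) → Link n} (hf : IsFestoonSeq f) {a : Fin n}
    (h₀ : (f 0).lo < a) (hlast : a ≤ (f (Fin.last p)).hi) :
    ∃ K, (f K).lo < a ∧ a ≤ (f K).hi ∧ ∀ i, i < K → (f i).hi < a := by
  obtain ⟨K, hK, hKmin⟩ :=
    Set.exists_min_image {i | a ≤ (f i).hi} id (Set.toFinite _) ⟨Fin.last p, hlast⟩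
  have hbefore : ∀ i, i < K → (f i).hi < a := fun i hi =>
    lt_of_not_ge fun h => (hKmin i h).not_gt hi
  refine ⟨K, ?_, hK, hbefore⟩
  rcases Fin.eq_zero_or_eq_succ K with rfl | ⟨i, rfl⟩
  · exact h₀
  · exact (hf.lo_le_hi_of_succ (i := i.castSucc) (by simp)).trans_lt
      (hbefore _ Fin.castSucc_lt_succ)

end IsFestoonSeq

theorem IsFestoon.exists_seq {X : Finset (Link n)} (hX : IsFestoon X) :
    ∃ p, ∃ f : Fin (p + 1) → Link n, IsFestoonSeq f ∧ X = Finset.univ.image f := by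
  obtain ⟨p, hp, f, hf, rfl⟩ := hX
  obtain ⟨p, rfl⟩ := Nat.exists_eq_add_one_of_ne_zero hp.ne'
  exact ⟨p, f, hf, rfl⟩

theorem IsFestoonSeq.exists_join_at {p q : ℕ} {f : Fin (p + 1) → Link n}
    {g : Fin (q + 1) → Link n} (hf : IsFestoonSeq f) (hg : IsFestoonSeq g) {K : Fin (p + 1)}
    {J : Fin (q + 1)} (hlo : (f K).lo < (g J).lo) (hhi : (f K).hi < (g J).hi)
    (hKJ : Intersects (f K) (g J)) (hbefore : ∀ i, i < K → ¬ Intersects (f i) (g J))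
    (hafter : ∀ j, J < j → (f K).hi < (g j).lo) :
    ∃ Z ⊆ Finset.univ.image f ∪ Finset.univ.image g, IsFestoon Z ∧
      festoonIval Z = Set.Icc (f 0).lo (g (Fin.last q)).hi := by
  let f' : Fin (K + 1) → Link n := f ∘ Fin.castLE K.isLt
  let g' : Fin (q - J + 1) → Link n := g ∘ fun j => ⟨J + j, by omega⟩
  have hf'K : ∀ i, (f' i).lo ≤ (f K).lo ∧ (f' i).hi ≤ (f K).hi := fun i =>
    hf.le_of_le (Fin.le_def.mpr (by simp; omega))
  have hg'J : ∀ j, (g J).lo ≤ (g' j).lo ∧ (g J).hi ≤ (g' j).hi := fun j =>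
    hg.le_of_le (Fin.le_def.mpr (by simp))
  have hmono : ∀ i j, (f' i).lo < (g' j).lo ∧ (f' i).hi < (g' j).hi := fun i j =>
    ⟨(hf'K i).1.trans_lt (hlo.trans_le (hg'J j).1), (hf'K i).2.trans_lt (hhi.trans_le (hg'J j).2)⟩
  have hadj : ∀ (i : Fin (K + 1)) (j : Fin (q - J + 1)), (i : ℕ) + 1 = K + 1 + j →
      Intersects (f' i) (g' j) := fun i j h => by
    have hi : f' i = f K := congrArg f (Fin.ext (by simp; omega))
    have hj : g' j = g J := congrArg g (Fin.ext (by dsimp only; omega))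
    exact hi ▸ hj ▸ hKJ
  have hsep : ∀ (i : Fin (K + 1)) (j : Fin (q - J + 1)), (i : ℕ) + 1 < K + 1 + j →
      ¬ Intersects (f' i) (g' j) := fun i j h => by
    by_cases hj0 : (j : ℕ) = 0
    · have hj : g' j = g J := congrArg g (Fin.ext (by simp [hj0]))
      exact hj ▸ hbefore _ (Fin.lt_def.mpr (by simp; omega))
    · rw [Link.intersects_iff (hmono i j).1 (hmono i j).2, not_le]
      exact (hf'K i).2.trans_lt (hafter _ (Fin.lt_def.mpr (by dsimp only; omega)))
  have hf' : IsFestoonSeq f' := hf.comp_of_val_eq _ fun _ => (zero_add _).symm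
  have hg' : IsFestoonSeq g' := hg.comp_of_val_eq _ fun _ => rfl
  have hZ := hf'.append hg' hmono hadj hsep
  refine ⟨Finset.univ.image (Fin.append f' g'), ?_, ⟨_, by omega, _, hZ, rfl⟩, ?_⟩
  · refine Finset.image_subset_iff.mpr fun i _ => ?_
    induction i using Fin.addCases with
    | left i => simp [f']
    | right j => simp [g']
  · have hfirst : Fin.append f' g' 0 = f 0 := Fin.append_left f' g' 0
    have hlast : Fin.append f' g' (Fin.last (K + 1 + (q - J))) = g (Fin.last q) :=
      (Fin.append_right f' g' (Fin.last _)).trans (congrArg g (Fin.ext (by simp; omega)))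
    rw [hZ.festoonIval_image (p := K + 1 + (q - J)), hfirst, hlast]

theorem IsFestoonSeq.exists_join {p q : ℕ} {f : Fin (p + 1) → Link n} {g : Fin (q + 1) → Link n}
    (hf : IsFestoonSeq f) (hg : IsFestoonSeq g) (h₁ : (f 0).lo < (g 0).lo)
    (h₂ : (g 0).lo ≤ (f (Fin.last p)).hi) (h₃ : (f (Fin.last p)).hi < (g (Fin.last q)).hi) :
    ∃ Z ⊆ Finset.univ.image f ∪ Finset.univ.image g, IsFestoon Z ∧
      festoonIval Z = Set.Icc (f 0).lo (g (Fin.last q)).hi := by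
  obtain ⟨J, hJlo, hJhi, hafter⟩ := hg.exists_last_lo_le h₂ h₃
  obtain ⟨K, hKlo, hK, hbefore⟩ :=
    hf.exists_first_le_hi (h₁.trans_le (hg.le_of_le (Fin.zero_le J)).1) hJlo
  have hhi : ∀ i, (f i).hi < (g J).hi := fun i => (hf.le_of_le (Fin.le_last i)).2.trans_lt hJhi
  refine hf.exists_join_at hg hKlo (hhi K) ((Link.intersects_iff hKlo (hhi K)).mpr hK)
    (fun i hi => ?_) (fun j hj => (hf.le_of_le (Fin.le_last K)).2.trans_lt (hafter j hj))
  rw [Link.intersects_iff ((hf.le_of_le hi.le).1.trans_lt hKlo) (hhi i), not_le]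
  exact hbefore i hi

end Festoon

theorem maximal_festoon_interval_laminar_general {n : ℕ}
    (Sbar : Finset (Link (n + 3)))
    (X : Finset (Link (n + 3))) (hX : IsFestoon X) (hXS : X ⊆ Sbar)
    (hmax : ∀ X'' : Finset (Link (n + 3)), X'' ⊆ Sbar → IsFestoon X'' →
      ¬ festoonIval X ⊂ festoonIval X'')
    (Y : Finset (Link (n + 3))) (hY : IsFestoon Y) (hYS : Y ⊆ Sbar) :
    festoonIval X ⊆ festoonIval Y ∨ festoonIval Y ⊆ festoonIval X ∨
      festoonIval X ∩ festoonIval Y = ∅ := by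
  obtain ⟨p, f, hf, rfl⟩ := hX.exists_seq
  obtain ⟨q, g, hg, rfl⟩ := hY.exists_seq
  rw [hf.festoonIval_image] at hmax ⊢
  rw [hg.festoonIval_image, ← Set.not_nonempty_iff_eq_empty]
  by_contra! hcross
  have hZS : ∀ Z : Finset (Link (n + 3)), Z ⊆ Finset.univ.image f ∪ Finset.univ.image g →
      Z ⊆ Sbar :=
    fun Z hZ => hZ.trans (Finset.union_subset hXS hYS)
  rcases Set.Icc_interleaved_of_not_nested hcross.1 hcross.2.1 hcross.2.2 with
    ⟨h₁, h₂, h₃⟩ | ⟨h₁, h₂, h₃⟩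
  · obtain ⟨Z, hZ, hZf, hZI⟩ := hf.exists_join hg h₁ h₂ h₃
    exact hmax Z (hZS Z hZ) hZf (hZI ▸ Set.Icc_ssubset_Icc_right (by order) le_rfl h₃)
  · obtain ⟨Z, hZ, hZf, hZI⟩ := hg.exists_join hf h₁ h₂ h₃
    exact hmax Z (hZS Z (hZ.trans (Finset.union_comm _ _).le)) hZf
      (hZI ▸ Set.Icc_ssubset_Icc_left (by order) h₁ le_rfl)

/-- let `X ⊆ S̄` be a festoon such that no festoon contained
in `S̄` has a festoon interval strictly containing `I_X`.  Then for every
festoon `Y ⊆ S̄`, the intervals `I_X` and `I_Y` do not cross: they are nested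
or disjoint. -/
theorem maximal_festoon_interval_laminar {n : ℕ}
    (L : Finset (Link (n + 3))) (c : Link (n + 3) → ℝ)
    (Sbar : Finset (Link (n + 3))) (hSbarL : Sbar ⊆ L)
    (X : Finset (Link (n + 3))) (hX : IsFestoon X) (hXS : X ⊆ Sbar)
    (hmax : ∀ X'' : Finset (Link (n + 3)), X'' ⊆ Sbar → IsFestoon X'' →
      ¬ festoonIval X ⊂ festoonIval X'')
    (Y : Finset (Link (n + 3))) (hY : IsFestoon Y) (hYS : Y ⊆ Sbar) :
    festoonIval X ⊆ festoonIval Y ∨ festoonIval Y ⊆ festoonIval X ∨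
      festoonIval X ∩ festoonIval Y = ∅ :=
  maximal_festoon_interval_laminar_general Sbar X hX hXS hmax Y hY hYS
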